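/- Let f : [0,1] → ℝ be Lipschitz continuous with Lipschitz constant C, and for j ≥ 0, 0 ≤ k ≤ 2^j − 1 let a_{j,k} = 2^j ∫_0^1 f(x) h_{2^j+k+1}(x) dx be the normalized Haar coefficients of f. Then for every J ≥ 0, the weighted tail sum of squared coefficients satisfies Σ_{j=J+1}^{∞} Σ_{k=0}^{2^j−1} a_{j,k}² · 2^{−j} ≤ C²/(48 · 4^J). -/

import Mathlib

/-!
On the dyadic interval `[p, p + 2d)` with `d = 2^{-j-1}` the Haar function is `+1` on the left
half and `-1` on the right half, so shifting the right half onto the left one gives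
`∫ f h_{j,k} = ∫_p^{p+d} (f x - f (x + d)) dx`, which the Lipschitz bound controls by `C d²`.
Hence `|a_{j,k}| ≤ C 2^{-j} / 4`, each level `j` contributes at most `C² 4^{-j} / 16`, and the
geometric series over `j > J` sums to `C² / (48 · 4^J)`.
-/

open MeasureTheory

/-- The Haar wavelet on `[0,1)` at dyadic level `j` with shift `k`
(corresponding to wavelet index `i = 2^j + k + 1 ≥ 2`). -/
noncomputable def haarFn (A B : ℝ) (j k : ℕ) (x : ℝ) : ℝ :=
  if A + k * (B - A) / 2 ^ j ≤ x ∧ x < A + (k + 1 / 2) * (B - A) / 2 ^ j then 1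
  else if A + (k + 1 / 2) * (B - A) / 2 ^ j ≤ x ∧ x < A + (k + 1) * (B - A) / 2 ^ j then -1
  else 0

open Set

noncomputable def dyadicPoint (A B : ℝ) (j : ℕ) (t : ℝ) : ℝ := A + t * (B - A) / 2 ^ j

lemma dyadicPoint_sub (A B : ℝ) (j : ℕ) (s t : ℝ) :
    dyadicPoint A B j t - dyadicPoint A B j s = (t - s) * (B - A) / 2 ^ j := by
  unfold dyadicPoint; ring

lemma dyadicPoint_mono {A B : ℝ} (hAB : A ≤ B) (j : ℕ) : Monotone (dyadicPoint A B j) :=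
  fun s t hst => sub_nonneg.1 <| by
    rw [dyadicPoint_sub]
    exact div_nonneg (mul_nonneg (sub_nonneg.2 hst) (sub_nonneg.2 hAB)) (by positivity)

lemma dyadicPoint_zero (A B : ℝ) (j : ℕ) : dyadicPoint A B j 0 = A := by
  simp [dyadicPoint]

lemma dyadicPoint_two_pow (A B : ℝ) (j : ℕ) : dyadicPoint A B j (2 ^ j) = B := by
  simp [dyadicPoint]

lemma dyadicPoint_mem_Icc {A B : ℝ} (hAB : A ≤ B) {j : ℕ} {t : ℝ}
    (ht : t ∈ Icc 0 (2 ^ j)) : dyadicPoint A B j t ∈ Icc A B := by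
  constructor
  · simpa only [dyadicPoint_zero] using dyadicPoint_mono hAB j ht.1
  · simpa only [dyadicPoint_two_pow] using dyadicPoint_mono hAB j ht.2

lemma haarFn_eq_ite (A B : ℝ) (j k : ℕ) (x : ℝ) :
    haarFn A B j k x =
      if dyadicPoint A B j k ≤ x ∧ x < dyadicPoint A B j (k + 1 / 2) then 1
      else if dyadicPoint A B j (k + 1 / 2) ≤ x ∧ x < dyadicPoint A B j (k + 1) then -1
      else 0 :=
  rfl

-- `Ioc` rather than `Ico` to match interval integrals; they differ only at the breakpoints.
lemma haarFn_ae_eq (A B : ℝ) (j k : ℕ) :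
    haarFn A B j k =ᵐ[volume]
      (Ioc (dyadicPoint A B j k) (dyadicPoint A B j (k + 1 / 2))).indicator 1 -
        (Ioc (dyadicPoint A B j (k + 1 / 2)) (dyadicPoint A B j (k + 1))).indicator 1 := by
  refine measure_mono_null (fun x hx => ?_) ((toFinite {dyadicPoint A B j k,
    dyadicPoint A B j (k + 1 / 2), dyadicPoint A B j (k + 1)}).measure_zero volume)
  by_contra! hx'
  simp only [mem_insert_iff, mem_singleton_iff, not_or] at hx'
  apply hx
  simp only [haarFn_eq_ite, Pi.sub_apply, indicator, mem_Ioc, Pi.one_apply, mem_ofPred_eq]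
  split_ifs <;> grind

lemma integral_mul_haarFn {f : ℝ → ℝ} {A B : ℝ} (hAB : A ≤ B) {j k : ℕ} (hk : k < 2 ^ j)
    (hf : IntervalIntegrable f volume A B) :
    ∫ x in A..B, f x * haarFn A B j k x =
      (∫ x in dyadicPoint A B j k..dyadicPoint A B j (k + 1 / 2), f x) -
        ∫ x in dyadicPoint A B j (k + 1 / 2)..dyadicPoint A B j (k + 1), f x := by
  have hk' : (k : ℝ) + 1 ≤ 2 ^ j := by exact_mod_cast hk
  have hAp := (dyadicPoint_mem_Icc hAB ⟨k.cast_nonneg, by linarith⟩).1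
  have hrB := (dyadicPoint_mem_Icc (j := j) hAB ⟨by positivity, hk'⟩).2
  have hpq := dyadicPoint_mono hAB j (by linarith : (k : ℝ) ≤ k + 1 / 2)
  have hqr := dyadicPoint_mono hAB j (by linarith : (k : ℝ) + 1 / 2 ≤ k + 1)
  have hfAB := (intervalIntegrable_iff_integrableOn_Ioc_of_le hAB).1 hf
  calc ∫ x in A..B, f x * haarFn A B j k x
      = ∫ x in Ioc A B,
          (Ioc (dyadicPoint A B j k) (dyadicPoint A B j (k + 1 / 2))).indicator f x -
            (Ioc (dyadicPoint A B j (k + 1 / 2)) (dyadicPoint A B j (k + 1))).indicator f x := by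
        rw [intervalIntegral.integral_of_le hAB]
        refine integral_congr_ae (ae_restrict_of_ae ?_)
        filter_upwards [haarFn_ae_eq A B j k] with x hx
        rw [hx, Pi.sub_apply, mul_sub, ← indicator_mul_right, ← indicator_mul_right]
        simp only [Pi.one_apply, mul_one]
    _ = _ := by
        rw [integral_sub (hfAB.integrableOn.integrable_indicator measurableSet_Ioc)
          (hfAB.integrableOn.integrable_indicator measurableSet_Ioc),
          setIntegral_indicator measurableSet_Ioc, setIntegral_indicator measurableSet_Ioc,
          inter_eq_right.2 (Ioc_subset_Ioc hAp (hqr.trans hrB)),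
          inter_eq_right.2 (Ioc_subset_Ioc (hAp.trans hpq) hrB),
          intervalIntegral.integral_of_le hpq, intervalIntegral.integral_of_le hqr]

lemma abs_integral_sub_integral_le_of_lipschitzOnWith {f : ℝ → ℝ} {K : NNReal} {p q r : ℝ}
    (hpq : p ≤ q) (hqr : r - q = q - p) (hf : LipschitzOnWith K f (Icc p r)) :
    |(∫ x in p..q, f x) - ∫ x in q..r, f x| ≤ K * (q - p) ^ 2 := by
  set d := q - p
  have hd : 0 ≤ d := sub_nonneg.2 hpq
  have hmaps : MapsTo (· + d) (Icc p q) (Icc p r) :=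
    fun x hx => ⟨by linarith [hx.1], by linarith [hx.2]⟩
  have hshift : ∫ x in q..r, f x = ∫ x in p..q, f (x + d) := by
    rw [intervalIntegral.integral_comp_add_right]; congr 1 <;> linarith
  have hint : IntervalIntegrable f volume p q :=
    (hf.continuousOn.mono (Icc_subset_Icc_right (by linarith))).intervalIntegrable_of_Icc hpq
  have hint_shift : IntervalIntegrable (fun x => f (x + d)) volume p q :=
    (hf.continuousOn.comp (continuous_add_const d).continuousOn hmaps).intervalIntegrable_of_Icc
      hpq
  have hbound : ∀ x ∈ uIoc p q, ‖f x - f (x + d)‖ ≤ K * d := by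
    intro x hx
    rw [uIoc_of_le hpq] at hx
    have hx' : x ∈ Icc p q := Ioc_subset_Icc_self hx
    calc ‖f x - f (x + d)‖ = dist (f x) (f (x + d)) := rfl
      _ ≤ K * dist x (x + d) :=
        hf.dist_le_mul x (Icc_subset_Icc_right (by linarith) hx') _ (hmaps hx')
      _ = K * d := by rw [Real.dist_eq, sub_add_cancel_left, abs_neg, abs_of_nonneg hd]
  rw [hshift, ← intervalIntegral.integral_sub hint hint_shift, ← Real.norm_eq_abs]
  calc ‖∫ x in p..q, f x - f (x + d)‖ ≤ K * d * |q - p| :=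
        intervalIntegral.norm_integral_le_of_norm_le_const hbound
    _ = K * d ^ 2 := by rw [abs_of_nonneg hd]; ring

lemma abs_integral_mul_haarFn_le {f : ℝ → ℝ} {K : NNReal} {A B : ℝ} (hAB : A ≤ B) {j k : ℕ}
    (hk : k < 2 ^ j) (hf : LipschitzOnWith K f (Icc A B)) :
    |∫ x in A..B, f x * haarFn A B j k x| ≤ K * ((B - A) / 2 ^ (j + 1)) ^ 2 := by
  have hk' : (k : ℝ) + 1 ≤ 2 ^ j := by exact_mod_cast hk
  have hAp := (dyadicPoint_mem_Icc hAB ⟨k.cast_nonneg, by linarith⟩).1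
  have hrB := (dyadicPoint_mem_Icc (j := j) hAB ⟨by positivity, hk'⟩).2
  rw [integral_mul_haarFn hAB hk (hf.continuousOn.intervalIntegrable_of_Icc hAB)]
  refine (abs_integral_sub_integral_le_of_lipschitzOnWith
    (dyadicPoint_mono hAB j (by linarith)) ?_ (hf.mono (Icc_subset_Icc hAp hrB))).trans_eq ?_
  · rw [dyadicPoint_sub, dyadicPoint_sub]; ring
  · rw [dyadicPoint_sub, pow_succ]; ring

noncomputable def haarCoeff (f : ℝ → ℝ) (j k : ℕ) : ℝ :=
  2 ^ j * ∫ x in (0 : ℝ)..1, f x * haarFn 0 1 j k x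

lemma abs_haarCoeff_le {f : ℝ → ℝ} {K : NNReal} (hf : LipschitzOnWith K f (Icc 0 1))
    {j k : ℕ} (hk : k < 2 ^ j) : |haarCoeff f j k| ≤ K / (4 * 2 ^ j) := by
  rw [haarCoeff, abs_mul, abs_of_pos (by positivity)]
  calc 2 ^ j * |∫ x in (0 : ℝ)..1, f x * haarFn 0 1 j k x|
      ≤ 2 ^ j * (K * ((1 - 0) / 2 ^ (j + 1)) ^ 2) := by
        gcongr; exact abs_integral_mul_haarFn_le zero_le_one hk hf
    _ = K / (4 * 2 ^ j) := by rw [pow_succ]; field_simp; ring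

lemma sum_sq_haarCoeff_le {f : ℝ → ℝ} {K : NNReal} (hf : LipschitzOnWith K f (Icc 0 1))
    (j : ℕ) :
    ∑ k ∈ Finset.range (2 ^ j), haarCoeff f j k ^ 2 * (2 : ℝ) ^ (-(j : ℤ)) ≤
      (K : ℝ) ^ 2 / 16 * 4⁻¹ ^ j := by
  calc _ ≤ ∑ k ∈ Finset.range (2 ^ j), (K / (4 * 2 ^ j)) ^ 2 * (2 : ℝ) ^ (-(j : ℤ)) :=
        Finset.sum_le_sum fun k hk => by
          rw [← sq_abs]; gcongr; exact abs_haarCoeff_le hf (Finset.mem_range.1 hk)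
    _ = (K : ℝ) ^ 2 / 16 * 4⁻¹ ^ j := by
        rw [Finset.sum_const, Finset.card_range, nsmul_eq_mul, zpow_neg, zpow_natCast, inv_pow,
          show (4 : ℝ) ^ j = 2 ^ j * 2 ^ j by rw [← mul_pow]; norm_num]
        push_cast; field_simp; ring

lemma hasSum_mul_geometric_tail_quarter (c : ℝ) (J : ℕ) :
    HasSum (fun n => c * 4⁻¹ ^ (J + 1 + n)) (c / (3 * 4 ^ J)) := by
  rw [show c / (3 * 4 ^ J) = c * 4⁻¹ ^ (J + 1) * (1 - 4⁻¹)⁻¹ by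
    rw [inv_pow]; field_simp; ring]
  simpa only [pow_add, mul_assoc] using
    (hasSum_geometric_of_lt_one (r := (4 : ℝ)⁻¹) (by norm_num) (by norm_num)).mul_left
      (c * 4⁻¹ ^ (J + 1))

/-- For a Lipschitz function `f` on `[0,1]` with constant `C` and normalized Haar
coefficients `a_{j,k} = 2^j ∫_0^1 f h_{2^j+k+1}`, the weighted tail sum
`Σ_{j=J+1}^∞ Σ_{k=0}^{2^j-1} a_{j,k}² 2^{-j}` (the squared `L²` norm of the tail of
the Haar expansion) is at most `C²/(48·4^J)`. Here the outer sum over `j > J` is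
written as a `tsum` over `n : ℕ` with `j = J + 1 + n`. -/
theorem haar_tail_l2_bound (C : ℝ) (f : ℝ → ℝ)
    (hf : ∀ x ∈ Set.Icc (0 : ℝ) 1, ∀ x' ∈ Set.Icc (0 : ℝ) 1,
      |f x - f x'| ≤ C * |x - x'|)
    (a : ℕ → ℕ → ℝ)
    (ha : ∀ j k : ℕ, a j k = 2 ^ j * ∫ x in (0 : ℝ)..1, f x * haarFn 0 1 j k x)
    (J : ℕ) :
    (∑' n : ℕ, ∑ k ∈ Finset.range (2 ^ (J + 1 + n)),
        (a (J + 1 + n) k) ^ 2 * (2 : ℝ) ^ (-(J + 1 + n : ℤ))) ≤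
      C ^ 2 / (48 * 4 ^ J) := by
  have hlip : LipschitzOnWith C.toNNReal f (Icc 0 1) :=
    .of_dist_le' fun x hx y hy => by simpa only [Real.dist_eq] using hf x hx y hy
  obtain rfl : a = haarCoeff f := funext fun j => funext (ha j)
  have hlevel : ∀ n : ℕ, ∑ k ∈ Finset.range (2 ^ (J + 1 + n)),
      haarCoeff f (J + 1 + n) k ^ 2 * (2 : ℝ) ^ (-(J + 1 + n : ℤ)) ≤
        (C.toNNReal : ℝ) ^ 2 / 16 * 4⁻¹ ^ (J + 1 + n) := fun n => by
    simpa only [Nat.cast_add, Nat.cast_one] using sum_sq_haarCoeff_le hlip (J + 1 + n)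
  have hgeom := hasSum_mul_geometric_tail_quarter ((C.toNNReal : ℝ) ^ 2 / 16) J
  have hK : (C.toNNReal : ℝ) ^ 2 ≤ C ^ 2 := by
    rw [Real.coe_toNNReal']; rcases le_total 0 C with h | h <;> simp [h, sq_nonneg]
  calc _ ≤ (C.toNNReal : ℝ) ^ 2 / 16 / (3 * 4 ^ J) :=
        (Summable.tsum_le_tsum hlevel (.of_nonneg_of_le (fun n => Finset.sum_nonneg
          fun k _ => by positivity) hlevel hgeom.summable) hgeom.summable).trans_eq hgeom.tsum_eq
    _ = (C.toNNReal : ℝ) ^ 2 / (48 * 4 ^ J) := by ring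
    _ ≤ C ^ 2 / (48 * 4 ^ J) := by gcongr
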